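/- If a random vector X in ℝⁿ has a log-concave density f, then log ‖f‖_∞^{−1/n} ≤ h(X)/n ≤ 1 + log ‖f‖_∞^{−1/n}; equivalently, 0 ≤ h(X) + log ‖f‖_∞ ≤ n. -/

import Mathlib

/-!
For `t ∈ (0, 1]` and any `x₀`, log-concavity gives
`f (t • x + (1 - t) • x₀) ≥ f x ^ t * f x₀ ^ (1 - t)`; integrating in `x` and rescaling by `t`
yields `f x₀ ^ (1 - t) * ∫ f ^ t ≤ t ^ (-n)`. On the other hand `a ^ t ≥ a - (1 - t) a log a`
(tangent line of `t ↦ a ^ t` at `t = 1`), so `∫ f ^ t ≥ 1 - (1 - t) ∫ f log f`. Comparing the two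
bounds and letting `t → 1⁻` gives `log f x₀ - n ≤ ∫ f log f`, i.e. `log ‖f‖_∞ ≤ n - h(f)`.
The other inequality `∫ f log f ≤ log ‖f‖_∞` holds for every probability density.
-/

open MeasureTheory ProbabilityTheory Real Pointwise

def IsLogConcave {n : ℕ} (f : EuclideanSpace ℝ (Fin n) → ℝ) : Prop :=
  (∀ x, 0 ≤ f x) ∧
  ∀ x y : EuclideanSpace ℝ (Fin n), ∀ t : ℝ, 0 ≤ t → t ≤ 1 →
    f x ^ t * f y ^ (1 - t) ≤ f (t • x + (1 - t) • y)

/-- The Shannon differential entropy `h(f) = -∫ f log f` of a density `f` on ℝⁿ. -/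
noncomputable def hEnt {n : ℕ} (f : EuclideanSpace ℝ (Fin n) → ℝ) : ℝ :=
  -∫ x, f x * Real.log (f x)

open Set Filter Topology ENNReal Module

theorem Real.sub_rpow_le_mul_mul_log {a : ℝ} (ha : 0 ≤ a) (t : ℝ) :
    a - a ^ t ≤ (1 - t) * (a * log a) := by
  rcases ha.eq_or_lt with rfl | ha
  · simpa using rpow_nonneg le_rfl t
  · have h := add_one_le_exp ((t - 1) * log a)
    have h' : a ^ t = a * exp ((t - 1) * log a) := by
      rw [rpow_def_of_pos ha, ← exp_log ha, ← exp_add, log_exp]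
      ring_nf
    rw [h']
    nlinarith

theorem Real.abs_mul_log_le {a B : ℝ} (ha : 0 ≤ a) (haB : a ≤ B) :
    |a * log a| ≤ |log B| * a + 2 * a ^ (2⁻¹ : ℝ) := by
  rcases ha.eq_or_lt with rfl | ha
  · simp
  have hupper : a * log a ≤ |log B| * a := by
    rw [mul_comm]
    exact mul_le_mul_of_nonneg_right ((log_le_log ha haB).trans (le_abs_self _)) ha.le
  have hlower := Real.sub_rpow_le_mul_mul_log ha.le 2⁻¹
  have := rpow_nonneg ha.le (2⁻¹ : ℝ)
  rw [abs_le]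
  constructor <;> nlinarith [abs_nonneg (log B)]

section Haar

variable {E : Type*} [NormedAddCommGroup E] [NormedSpace ℝ E] [MeasurableSpace E] [BorelSpace E]
  [FiniteDimensional ℝ E] (μ : Measure E) [μ.IsAddHaarMeasure]

theorem MeasureTheory.Measure.lintegral_comp_smul (g : E → ℝ≥0∞) {R : ℝ} (hR : R ≠ 0) :
    ∫⁻ x, g (R • x) ∂μ = ENNReal.ofReal |(R ^ finrank ℝ E)⁻¹| * ∫⁻ x, g x ∂μ := by
  calc ∫⁻ x, g (R • x) ∂μ = ∫⁻ x, g x ∂(μ.map (R • ·)) :=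
        (lintegral_map_equiv g (Homeomorph.smulOfNeZero R hR).toMeasurableEquiv).symm
    _ = _ := by rw [map_addHaar_smul μ hR, lintegral_smul_measure, smul_eq_mul]

theorem QuasiconcaveOn.aemeasurable {g : E → ℝ} (hg : QuasiconcaveOn ℝ univ g) :
    AEMeasurable g μ :=
  NullMeasurable.aemeasurable (measurable_of_Ioi (δ := NullMeasurableSpace E μ)
    fun r => by
      have := (hg.convex_gt r).nullMeasurableSet μ
      rwa [sep_univ] at this)

end Haar

theorem HasDerivAt.le_of_eventually_sub_le {g : ℝ → ℝ} {d b I : ℝ} (hg : HasDerivAt g d b)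
    (h : ∀ᶠ t in 𝓝[<] b, g b - g t ≤ (b - t) * I) : d ≤ I := by
  have hslope : Tendsto (slope g b) (𝓝[<] b) (𝓝 d) :=
    (hasDerivAt_iff_tendsto_slope.1 hg).mono_left (nhdsWithin_mono b fun t ht => ne_of_lt ht)
  refine le_of_tendsto hslope ?_
  filter_upwards [h, self_mem_nhdsWithin] with t ht htb
  have htb : 0 < b - t := sub_pos.2 htb
  rw [slope_def_field, ← neg_div_neg_eq, neg_sub, neg_sub, div_le_iff₀ htb]
  linarith

section MeasureSpace

variable {α : Type*} [MeasurableSpace α] {μ : Measure α} {f : α → ℝ}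

theorem integral_sub_integral_rpow_le (hf : ∀ x, 0 ≤ f x) (hfi : Integrable f μ) {t : ℝ}
    (hft : Integrable (fun x => f x ^ t) μ) (hlog : Integrable (fun x => f x * log (f x)) μ) :
    ∫ x, f x ∂μ - ∫ x, f x ^ t ∂μ ≤ (1 - t) * ∫ x, f x * log (f x) ∂μ := by
  rw [← integral_sub hfi hft, ← integral_const_mul]
  exact integral_mono (hfi.sub hft) (hlog.const_mul _)
    fun x => Real.sub_rpow_le_mul_mul_log (hf x) t

theorem integral_mul_log_le_log_of_ae_le (hf : ∀ x, 0 ≤ f x) (hfi : Integrable f μ)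
    (hf1 : ∫ x, f x ∂μ = 1) (hlog : Integrable (fun x => f x * log (f x)) μ) {M : ℝ}
    (hfM : ∀ᵐ x ∂μ, f x ≤ M) : ∫ x, f x * log (f x) ∂μ ≤ log M := by
  calc ∫ x, f x * log (f x) ∂μ ≤ ∫ x, f x * log M ∂μ := by
        refine integral_mono_ae hlog (hfi.mul_const _) ?_
        filter_upwards [hfM] with x hx
        rcases (hf x).eq_or_lt with h0 | h0
        · simp [← h0]
        · exact mul_le_mul_of_nonneg_left (log_le_log h0 hx) h0.le
    _ = log M := by rw [integral_mul_const, hf1, one_mul]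

end MeasureSpace

namespace IsLogConcave

variable {n : ℕ} {f : EuclideanSpace ℝ (Fin n) → ℝ}

theorem quasiconcaveOn (hf : IsLogConcave f) : QuasiconcaveOn ℝ univ f := by
  refine quasiconcaveOn_iff_min_le.2 ⟨convex_univ, fun x _ y _ a b ha hb hab => ?_⟩
  obtain rfl : b = 1 - a := by linarith
  have hm : 0 ≤ min (f x) (f y) := le_min (hf.1 x) (hf.1 y)
  calc min (f x) (f y) = min (f x) (f y) ^ a * min (f x) (f y) ^ (1 - a) := by
        rw [← rpow_add' hm (by norm_num), add_sub_cancel, Real.rpow_one]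
    _ ≤ f x ^ a * f y ^ (1 - a) :=
        mul_le_mul (rpow_le_rpow hm (min_le_left _ _) ha) (rpow_le_rpow hm (min_le_right _ _) hb)
          (by positivity) (rpow_nonneg (hf.1 x) a)
    _ ≤ f (a • x + (1 - a) • y) := hf.2 x y a ha (by linarith)

theorem aemeasurable (hf : IsLogConcave f) : AEMeasurable f :=
  hf.quasiconcaveOn.aemeasurable volume

theorem rpow_mul_lintegral_rpow_le (hf : IsLogConcave f) (x₀ : EuclideanSpace ℝ (Fin n))
    {t : ℝ} (ht0 : 0 < t) (ht1 : t ≤ 1) :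
    ENNReal.ofReal (f x₀ ^ (1 - t)) * ∫⁻ x, ENNReal.ofReal (f x ^ t)
      ≤ ENNReal.ofReal (t ^ n)⁻¹ * ∫⁻ x, ENNReal.ofReal (f x) := by
  calc ENNReal.ofReal (f x₀ ^ (1 - t)) * ∫⁻ x, ENNReal.ofReal (f x ^ t)
      = ∫⁻ x, ENNReal.ofReal (f x ^ t * f x₀ ^ (1 - t)) := by
        rw [← lintegral_const_mul' _ _ ofReal_ne_top]
        simp_rw [mul_comm (f _ ^ t), ENNReal.ofReal_mul (rpow_nonneg (hf.1 x₀) _)]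
    _ ≤ ∫⁻ x, ENNReal.ofReal (f (t • x + (1 - t) • x₀)) :=
        lintegral_mono fun x => ENNReal.ofReal_le_ofReal (hf.2 x x₀ t ht0.le ht1)
    _ = ENNReal.ofReal |(t ^ finrank ℝ (EuclideanSpace ℝ (Fin n)))⁻¹|
          * ∫⁻ y, ENNReal.ofReal (f (y + (1 - t) • x₀)) :=
        volume.lintegral_comp_smul (fun y => ENNReal.ofReal (f (y + (1 - t) • x₀))) ht0.ne'
    _ = ENNReal.ofReal (t ^ n)⁻¹ * ∫⁻ x, ENNReal.ofReal (f x) := by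
        rw [lintegral_add_right_eq_self (fun y => ENNReal.ofReal (f y)), finrank_euclideanSpace_fin,
          abs_of_pos (by positivity)]

theorem integrable (hf : IsLogConcave f) (hint : ∫⁻ x, ENNReal.ofReal (f x) = 1) :
    Integrable f := by
  refine ⟨hf.aemeasurable.aestronglyMeasurable, ?_⟩
  rw [hasFiniteIntegral_iff_ofReal (ae_of_all _ hf.1), hint]
  exact one_lt_top

theorem integral_eq_one (hf : IsLogConcave f) (hint : ∫⁻ x, ENNReal.ofReal (f x) = 1) :
    ∫ x, f x = 1 := by
  rw [integral_eq_lintegral_of_nonneg_ae (ae_of_all _ hf.1)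
    hf.aemeasurable.aestronglyMeasurable, hint, ENNReal.toReal_one]

theorem rpow_mul_integral_rpow_le (hf : IsLogConcave f) (hint : ∫⁻ x, ENNReal.ofReal (f x) = 1)
    (x₀ : EuclideanSpace ℝ (Fin n)) {t : ℝ} (ht0 : 0 < t) (ht1 : t ≤ 1) :
    f x₀ ^ (1 - t) * ∫ x, f x ^ t ≤ (t ^ n)⁻¹ := by
  have h := hf.rpow_mul_lintegral_rpow_le x₀ ht0 ht1
  rw [hint, mul_one] at h
  have h := ENNReal.toReal_mono ofReal_ne_top h
  rwa [toReal_mul, toReal_ofReal (rpow_nonneg (hf.1 x₀) _), toReal_ofReal (by positivity),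
    ← integral_eq_lintegral_of_nonneg_ae (ae_of_all _ fun x => rpow_nonneg (hf.1 x) t)
      (hf.aemeasurable.pow_const t).aestronglyMeasurable] at h

theorem exists_pos (hf : IsLogConcave f) (hint : ∫⁻ x, ENNReal.ofReal (f x) = 1) :
    ∃ x, 0 < f x := by
  by_contra! h
  have hzero : ∀ x, f x = 0 := fun x => le_antisymm (h x) (hf.1 x)
  simp [hzero] at hint

theorem integrable_rpow (hf : IsLogConcave f) (hint : ∫⁻ x, ENNReal.ofReal (f x) = 1)
    {t : ℝ} (ht0 : 0 < t) (ht1 : t ≤ 1) : Integrable (fun x => f x ^ t) := by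
  obtain ⟨x₀, hx₀⟩ := hf.exists_pos hint
  have h := hf.rpow_mul_lintegral_rpow_le x₀ ht0 ht1
  rw [hint, mul_one] at h
  refine ⟨(hf.aemeasurable.pow_const t).aestronglyMeasurable, ?_⟩
  rw [hasFiniteIntegral_iff_ofReal (ae_of_all _ fun x => rpow_nonneg (hf.1 x) t)]
  exact ENNReal.lt_top_of_mul_ne_top_right (ne_top_of_le_ne_top ofReal_ne_top h)
    (ENNReal.ofReal_pos.2 (rpow_pos_of_pos hx₀ _)).ne'

theorem exists_forall_le (hf : IsLogConcave f) (hint : ∫⁻ x, ENNReal.ofReal (f x) = 1) :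
    ∃ B, ∀ x, f x ≤ B := by
  set J := ∫ x, f x ^ (2⁻¹ : ℝ)
  have hJ : 0 < J := by
    refine (integral_nonneg fun x => rpow_nonneg (hf.1 x) _).lt_of_ne' fun hJ => ?_
    have hzero := (integral_eq_zero_iff_of_nonneg (fun x => rpow_nonneg (hf.1 x) _)
      (hf.integrable_rpow hint (by norm_num) (by norm_num))).1 hJ
    have : ∫ x, f x = 0 := integral_eq_zero_of_ae <| hzero.mono fun x hx => by
      simpa [rpow_eq_zero (hf.1 x)] using hx
    simp [hf.integral_eq_one hint] at this
  refine ⟨(2 ^ n / J) ^ 2, fun x => ?_⟩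
  have h := hf.rpow_mul_integral_rpow_le hint x (t := 2⁻¹) (by norm_num) (by norm_num)
  rw [← le_div_iff₀ hJ, show (1 : ℝ) - 2⁻¹ = 2⁻¹ by norm_num, inv_pow, inv_inv] at h
  calc f x = (f x ^ (2⁻¹ : ℝ)) ^ 2 := by
        rw [← Real.rpow_natCast, ← Real.rpow_mul (hf.1 x)]; norm_num
    _ ≤ (2 ^ n / J) ^ 2 := pow_le_pow_left₀ (rpow_nonneg (hf.1 x) _) h 2

theorem integrable_mul_log (hf : IsLogConcave f) (hint : ∫⁻ x, ENNReal.ofReal (f x) = 1) :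
    Integrable (fun x => f x * log (f x)) := by
  obtain ⟨B, hB⟩ := hf.exists_forall_le hint
  refine Integrable.mono' (((hf.integrable hint).const_mul |log B|).add
    ((hf.integrable_rpow hint (t := 2⁻¹) (by norm_num) (by norm_num)).const_mul 2))
    (hf.aemeasurable.mul hf.aemeasurable.log).aestronglyMeasurable
    (ae_of_all _ fun x => ?_)
  rw [norm_eq_abs]
  exact Real.abs_mul_log_le (hf.1 x) (hB x)

theorem le_exp_integral_mul_log_add (hf : IsLogConcave f)
    (hint : ∫⁻ x, ENNReal.ofReal (f x) = 1) (x₀ : EuclideanSpace ℝ (Fin n)) :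
    f x₀ ≤ exp ((∫ x, f x * log (f x)) + n) := by
  rcases (hf.1 x₀).eq_or_lt with h0 | hc
  · rw [← h0]; positivity
  rw [← log_le_iff_le_exp hc, ← sub_le_iff_le_add]
  set c := f x₀
  -- `(t ^ n)⁻¹ * c ^ (t - 1)` is the upper bound on `∫ f ^ t`; it equals `1` at `t = 1`
  have hg : HasDerivAt (fun s : ℝ => (s ^ n)⁻¹ * c ^ (s - 1)) (log c - n) 1 := by
    have hinv : HasDerivAt (fun s : ℝ => (s ^ n)⁻¹) (-n) 1 := by
      simpa using (hasDerivAt_pow n (1 : ℝ)).fun_inv (by simp)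
    have hpow : HasDerivAt (fun s : ℝ => c ^ (s - 1)) (log c) 1 := by
      simpa using ((hasDerivAt_id (1 : ℝ)).sub_const 1).const_rpow hc
    refine (hinv.fun_mul hpow).congr_deriv ?_
    norm_num
    ring
  refine hg.le_of_eventually_sub_le ?_
  filter_upwards [Ioo_mem_nhdsLT zero_lt_one] with t ⟨ht0, ht1⟩
  have hupper := hf.rpow_mul_integral_rpow_le hint x₀ ht0 ht1.le
  have hlower := integral_sub_integral_rpow_le hf.1 (hf.integrable hint)
    (hf.integrable_rpow hint ht0 ht1.le) (hf.integrable_mul_log hint)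
  have hc' : c ^ (t - 1) = (c ^ (1 - t))⁻¹ := by rw [← rpow_neg hc.le, neg_sub]
  rw [hf.integral_eq_one hint] at hlower
  rw [← le_div_iff₀' (rpow_pos_of_pos hc _)] at hupper
  simp only [one_pow, inv_one, sub_self, Real.rpow_zero, one_mul, hc']
  rw [← div_eq_mul_inv]
  linarith

end IsLogConcave

theorem entropy_vs_max_density_general
    {n : ℕ}
    {Ω : Type} [MeasureSpace Ω] (hP : IsProbabilityMeasure (ℙ : Measure Ω))
    (X : Ω → EuclideanSpace ℝ (Fin n)) (hX : Measurable X)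
    (f : EuclideanSpace ℝ (Fin n) → ℝ) (hf : IsLogConcave f)
    (hXf : Measure.map X (ℙ : Measure Ω)
      = volume.withDensity (fun x => ENNReal.ofReal (f x))) :
    0 ≤ hEnt f + Real.log ((essSup (fun x => ENNReal.ofReal (f x)) volume).toReal)
    ∧ hEnt f + Real.log ((essSup (fun x => ENNReal.ofReal (f x)) volume).toReal)
        ≤ n := by
  have hint : ∫⁻ x, ENNReal.ofReal (f x) = 1 := by
    have := Measure.isProbabilityMeasure_map (μ := ℙ) hX.aemeasurable
    have h := measure_univ (μ := Measure.map X ℙ)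
    rwa [hXf, withDensity_apply _ MeasurableSet.univ, setLIntegral_univ] at h
  set M := essSup (fun x => ENNReal.ofReal (f x)) volume
  set I := ∫ x, f x * log (f x)
  have hM_le : M ≤ ENNReal.ofReal (exp (I + n)) := essSup_le_of_ae_le _ <|
    ae_of_all _ fun x => ENNReal.ofReal_le_ofReal (hf.le_exp_integral_mul_log_add hint x)
  have hM_ne_top : M ≠ ⊤ := ne_top_of_le_ne_top ofReal_ne_top hM_le
  have hM_ne_zero : M ≠ 0 := fun h0 => by
    rw [ENNReal.essSup_eq_zero_iff] at h0
    simp [lintegral_congr_ae h0] at hint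
  have hf_le_M : ∀ᵐ x, f x ≤ M.toReal :=
    (ENNReal.ae_le_essSup _).mono fun x hx => (ENNReal.ofReal_le_iff_le_toReal hM_ne_top).1 hx
  have hupper : I ≤ log M.toReal := integral_mul_log_le_log_of_ae_le hf.1 (hf.integrable hint)
    (hf.integral_eq_one hint) (hf.integrable_mul_log hint) hf_le_M
  have hlower : log M.toReal ≤ I + n := by
    rw [log_le_iff_le_exp (toReal_pos hM_ne_zero hM_ne_top)]
    exact toReal_le_of_le_ofReal (exp_pos _).le hM_le
  unfold hEnt
  constructor <;> linarith

/-- Two-sided comparison of the entropy of a log-concave random vector with the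
maximal value of its density: if `X` has log-concave density `f` on ℝⁿ, then
`0 ≤ h(X) + log ‖f‖_∞ ≤ n`, i.e.
`log ‖f‖_∞^{-1/n} ≤ h(X)/n ≤ 1 + log ‖f‖_∞^{-1/n}`. -/
theorem entropy_vs_max_density
    {n : ℕ} (hn : 1 ≤ n)
    {Ω : Type} [MeasureSpace Ω] (hP : IsProbabilityMeasure (ℙ : Measure Ω))
    (X : Ω → EuclideanSpace ℝ (Fin n)) (hX : Measurable X)
    (f : EuclideanSpace ℝ (Fin n) → ℝ) (hf : IsLogConcave f)
    (hXf : Measure.map X (ℙ : Measure Ω)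
      = volume.withDensity (fun x => ENNReal.ofReal (f x))) :
    0 ≤ hEnt f + Real.log ((essSup (fun x => ENNReal.ofReal (f x)) volume).toReal)
    ∧ hEnt f + Real.log ((essSup (fun x => ENNReal.ofReal (f x)) volume).toReal)
        ≤ n :=
  entropy_vs_max_density_general hP X hX f hf hXf
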